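/- arXiv:2506.08481 — 2 statements merged into one kernel-verified Lean document; each statement's English description precedes it below -/
import Mathlib

section
/- Let Q(ζ, s) = (ζ − ζ₀)^m + Σ_{k=1}^m a_k(s)(ζ − ζ₀)^{m−k} be a monic polynomial in ζ of degree m ≥ 1 whose coefficients a_k(s) are continuous in s with a_k(0) = 0. Suppose the roots ζ_1(s), …, ζ_m(s) satisfy: for each j, either ζ_j(s) = ζ_1(s) identically, or |ζ_j(s) − ζ_1(s)| ≥ c |s|^{ν₁} for small |s|, with c > 0, ν₁ > 0. Then there exist ν > 0, c₁ > 0, c₂ > 0 and μ > ν such that |Q(ζ, s)| ≥ c₂ |s|^{μ} whenever |ζ − ζ_1(s)| = c₁ |s|^{ν} and |s| is sufficiently small. -/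
/-! On the circle `‖ζ - ζ_1(s)‖ = c |s|^(ν₁+1)` every root `ζ_j(s)` is at least as far from `ζ`
as `ζ_1(s)` is: trivially if `ζ_j = ζ_1`, and otherwise because `ζ_j(s)` lies at distance at least
`c |s|^ν₁` from `ζ_1(s)`, which is twice the radius of the circle once `|s| ≤ 1/2`. Hence
`|Q(ζ, s)| ≥ (c |s|^(ν₁+1))^m`, and this dominates `c^m |s|^(m(ν₁+1)+1)` for `|s| ≤ 1`. -/

lemma norm_sub_le_norm_sub_of_two_mul_le {E : Type*} [SeminormedAddCommGroup E] {ζ z w : E}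
    (h : 2 * ‖ζ - z‖ ≤ ‖w - z‖) : ‖ζ - z‖ ≤ ‖ζ - w‖ := by
  have : ‖w - z‖ ≤ ‖ζ - z‖ + ‖ζ - w‖ := by
    simpa only [sub_sub_sub_cancel_left] using norm_sub_le (ζ - z) (ζ - w)
  linarith

lemma two_mul_rpow_add_one_le_rpow {r : ℝ} (hr : 0 < r) (hr2 : r ≤ 1 / 2) (ν : ℝ) :
    2 * r ^ (ν + 1) ≤ r ^ ν := by
  rw [Real.rpow_add_one hr.ne']
  nlinarith [Real.rpow_pos_of_pos hr ν]

lemma mul_rpow_add_one_le_pow_mul_rpow {r c : ℝ} (hr : 0 < r) (hr1 : r ≤ 1) (hc : 0 ≤ c)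
    (m : ℕ) (ν : ℝ) : c ^ m * r ^ (m * ν + 1) ≤ (c * r ^ ν) ^ m := by
  rw [mul_pow, ← Real.rpow_mul_natCast hr.le, mul_comm ν]
  exact mul_le_mul_of_nonneg_left
    (Real.rpow_le_rpow_of_exponent_ge hr hr1 (by linarith)) (pow_nonneg hc m)

theorem stmt_4_general (m : ℕ) (hm : 1 ≤ m) (ζ₀ : ℂ)
    (a : Fin m → ℝ → ℂ)
    (z : Fin m → ℝ → ℂ)
    -- Q factors through its roots:
    (hfact : ∀ (ζ : ℂ) (s : ℝ),
      (ζ - ζ₀) ^ m + ∑ k : Fin m, a k s * (ζ - ζ₀) ^ (m - (k.1 + 1)) =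
        ∏ j : Fin m, (ζ - z j s))
    -- separation of the roots from the chosen root `z 0`:
    (c ν₁ s₀ : ℝ) (hc : 0 < c) (hν₁ : 0 < ν₁) (hs₀ : 0 < s₀)
    (hsep : ∀ j : Fin m,
      (∀ s : ℝ, |s| < s₀ → z j s = z ⟨0, hm⟩ s) ∨
      (∀ s : ℝ, 0 < |s| → |s| < s₀ → c * |s| ^ ν₁ ≤ ‖z j s - z ⟨0, hm⟩ s‖)) :
    ∃ ν > (0:ℝ), ∃ c₁ > (0:ℝ), ∃ c₂ > (0:ℝ), ∃ μ > ν, ∃ s₁ > (0:ℝ),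
      ∀ (s : ℝ) (ζ : ℂ), 0 < |s| → |s| < s₁ →
        ‖ζ - z ⟨0, hm⟩ s‖ = c₁ * |s| ^ ν →
        c₂ * |s| ^ μ ≤
          ‖(ζ - ζ₀) ^ m + ∑ k : Fin m, a k s * (ζ - ζ₀) ^ (m - (k.1 + 1))‖ := by
  have hm' : (1 : ℝ) ≤ m := by exact_mod_cast hm
  refine ⟨ν₁ + 1, by linarith, c, hc, c ^ m, by positivity, m * (ν₁ + 1) + 1, by nlinarith,
    min s₀ (1 / 2), by positivity, fun s ζ hs hs₁ hcirc => ?_⟩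
  have hs_lt : |s| < s₀ := hs₁.trans_le (min_le_left _ _)
  have hs_half : |s| ≤ 1 / 2 := (hs₁.trans_le (min_le_right _ _)).le
  have hroot_far : ∀ j, ‖ζ - z ⟨0, hm⟩ s‖ ≤ ‖ζ - z j s‖ := fun j => by
    rcases hsep j with heq | hfar
    · rw [heq s hs_lt]
    · refine norm_sub_le_norm_sub_of_two_mul_le ?_
      rw [hcirc, mul_left_comm]
      exact (mul_le_mul_of_nonneg_left (two_mul_rpow_add_one_le_rpow hs hs_half ν₁)
        hc.le).trans (hfar s hs hs_lt)
  calc c ^ m * |s| ^ (m * (ν₁ + 1) + 1)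
      ≤ ∏ _j : Fin m, ‖ζ - z ⟨0, hm⟩ s‖ := by
        rw [Finset.prod_const, Finset.card_univ, Fintype.card_fin, hcirc]
        exact mul_rpow_add_one_le_pow_mul_rpow hs (by linarith) hc.le m _
    _ ≤ ∏ j, ‖ζ - z j s‖ := Finset.prod_le_prod (fun _ _ => norm_nonneg _) fun j _ => hroot_far j
    _ = _ := by rw [hfact, norm_prod]

/-- Lower bound for a monic polynomial `Q(ζ,s) = (ζ-ζ₀)^m + ∑ a_k(s)(ζ-ζ₀)^{m-k}` on a small
circle around one of its roots `ζ_1(s)`, given Puiseux-type separation of the other roots. -/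
theorem stmt_4 (m : ℕ) (hm : 1 ≤ m) (ζ₀ : ℂ)
    (a : Fin m → ℝ → ℂ) (hacont : ∀ k, Continuous (a k)) (ha0 : ∀ k, a k 0 = 0)
    (z : Fin m → ℝ → ℂ)
    -- Q factors through its roots:
    (hfact : ∀ (ζ : ℂ) (s : ℝ),
      (ζ - ζ₀) ^ m + ∑ k : Fin m, a k s * (ζ - ζ₀) ^ (m - (k.1 + 1)) =
        ∏ j : Fin m, (ζ - z j s))
    -- separation of the roots from the chosen root `z 0`:
    (c ν₁ s₀ : ℝ) (hc : 0 < c) (hν₁ : 0 < ν₁) (hs₀ : 0 < s₀)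
    (hsep : ∀ j : Fin m,
      (∀ s : ℝ, |s| < s₀ → z j s = z ⟨0, hm⟩ s) ∨
      (∀ s : ℝ, 0 < |s| → |s| < s₀ → c * |s| ^ ν₁ ≤ ‖z j s - z ⟨0, hm⟩ s‖)) :
    ∃ ν > (0:ℝ), ∃ c₁ > (0:ℝ), ∃ c₂ > (0:ℝ), ∃ μ > ν, ∃ s₁ > (0:ℝ),
      ∀ (s : ℝ) (ζ : ℂ), 0 < |s| → |s| < s₁ →
        ‖ζ - z ⟨0, hm⟩ s‖ = c₁ * |s| ^ ν →
        c₂ * |s| ^ μ ≤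
          ‖(ζ - ζ₀) ^ m + ∑ k : Fin m, a k s * (ζ - ζ₀) ^ (m - (k.1 + 1))‖ :=
  stmt_4_general m hm ζ₀ a z hfact c ν₁ s₀ hc hν₁ hs₀ hsep
end

section
/- Let φ₁ ∈ C₀^∞(ℝ) with |∂^j φ₁| ≤ C A^j (j!)^{s₁}, ψ ∈ C₀^∞(ℝ) with |∂^k ψ| ≤ C A^k (k!)^{s₂}, where 1 < s₂ < s'₂ < s and s₁ < s. Set g_ρ(x₁, x_{n−1}) = φ₁(x₁) ψ(ρ^{N/l} x_{n−1}) for ρ ≥ 1, where N/l < s − s'₂. Then there exist h > 0 and C' > 0, independent of ρ, with Σ_{j,k} h^{j+k} sup |∂_{x₁}^j ∂_{x_{n−1}}^k g_ρ| / ((j+k)!)^s ≤ C' e^{(s−s'₂) ρ^{(N/l)/(s−s'₂)}}. -/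
open Real

lemma myConstMul (n : ℕ) (a : ℂ) {f : ℝ → ℂ} (hf : ContDiff ℝ (⊤ : ℕ∞) f) (x : ℝ) :
    iteratedDeriv n (fun y => a * f y) x = a * iteratedDeriv n f x := by
  rw [← iteratedDerivWithin_univ, ← iteratedDerivWithin_univ]
  have h1 : (fun y => a * f y) = a • f := by funext y; simp [smul_eq_mul]
  rw [h1, iteratedDerivWithin_const_smul (Set.mem_univ x) uniqueDiffOn_univ a
    (hf.of_le (by exact_mod_cast le_top)).contDiffWithinAt, smul_eq_mul]

lemma myExpBound {x : ℝ} (hx : 0 ≤ x) (k : ℕ) : x ^ k ≤ (k.factorial : ℝ) * Real.exp x := by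
  have h := Real.pow_div_factorial_le_exp x hx k
  have hk : (0:ℝ) < k.factorial := by exact_mod_cast k.factorial_pos
  calc x ^ k = x ^ k / k.factorial * k.factorial := by field_simp
    _ ≤ Real.exp x * k.factorial := mul_le_mul_of_nonneg_right h hk.le
    _ = _ := mul_comm _ _

set_option maxHeartbeats 1000000 in
/-- Uniform Gevrey-norm bound, in terms of `ρ`, for the dilated product
`g_ρ(x₁,x_{n-1}) = φ₁(x₁) ψ(ρ^{N/l} x_{n-1})`. -/
theorem stmt_14 (φ₁ ψ : ℝ → ℂ)
    (hφ₁ : ContDiff ℝ (⊤ : ℕ∞) φ₁) (hφ₁supp : HasCompactSupport φ₁)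
    (hψ : ContDiff ℝ (⊤ : ℕ∞) ψ) (hψsupp : HasCompactSupport ψ)
    (C A s₁ s₂ s'₂ s N l : ℝ)
    (hC : 0 < C) (hA : 0 < A)
    (hs₂ : 1 < s₂) (hs₂' : s₂ < s'₂) (hs' : s'₂ < s) (hs₁ : s₁ < s)
    (hN : 0 < N) (hl : 0 < l) (hNl : N / l < s - s'₂)
    (hφ₁Gev : ∀ (j : ℕ) (x : ℝ),
      norm (iteratedDeriv j φ₁ x) ≤ C * A ^ j * (j.factorial : ℝ) ^ s₁)
    (hψGev : ∀ (k : ℕ) (x : ℝ),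
      norm (iteratedDeriv k ψ x) ≤ C * A ^ k * (k.factorial : ℝ) ^ s₂) :
    ∃ h > (0:ℝ), ∃ C' > (0:ℝ), ∀ ρ : ℝ, 1 ≤ ρ →
      (Summable (fun p : ℕ × ℕ =>
        h ^ (p.1 + p.2) *
          (⨆ x₁ : ℝ, ⨆ y : ℝ, norm (iteratedDeriv p.1
            (fun x' => iteratedDeriv p.2 (fun y' => φ₁ x' * ψ (ρ ^ (N / l) * y')) y) x₁)) /
          ((p.1 + p.2).factorial : ℝ) ^ s)) ∧
      (∑' p : ℕ × ℕ,
        h ^ (p.1 + p.2) *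
          (⨆ x₁ : ℝ, ⨆ y : ℝ, norm (iteratedDeriv p.1
            (fun x' => iteratedDeriv p.2 (fun y' => φ₁ x' * ψ (ρ ^ (N / l) * y')) y) x₁)) /
          ((p.1 + p.2).factorial : ℝ) ^ s) ≤
        C' * Real.exp ((s - s'₂) * ρ ^ ((N / l) / (s - s'₂))) := by
  have hspos : (0:ℝ) < s := by linarith
  refine ⟨(2*A)⁻¹, by positivity, 4*C^2, by positivity, fun ρ hρ => ?_⟩
  have hρ0 : (0:ℝ) < ρ := lt_of_lt_of_le one_pos hρ
  set σ := s - s'₂ with hσdef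
  have hσ : 0 < σ := sub_pos.mpr hs'
  set c := ρ ^ (N / l) with hc
  have hc0 : 0 < c := Real.rpow_pos_of_pos hρ0 _
  set x := ρ ^ (N / l / σ) with hx
  have hx0 : (0:ℝ) ≤ x := (Real.rpow_pos_of_pos hρ0 _).le
  set E := Real.exp (σ * x) with hE
  have hE0 : 0 < E := Real.exp_pos _
  -- key exponential estimate
  have hkey : ∀ k : ℕ, c ^ k ≤ (k.factorial : ℝ) ^ σ * E := by
    intro k
    have e1 : c ^ k = ρ ^ (N / l * k) := by
      rw [hc, ← Real.rpow_natCast (ρ ^ (N / l)) k, ← Real.rpow_mul hρ0.le]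
    have e2 : (x ^ k) ^ σ = ρ ^ (N / l / σ * k * σ) := by
      rw [hx, ← Real.rpow_natCast (ρ ^ (N / l / σ)) k, ← Real.rpow_mul hρ0.le,
        ← Real.rpow_mul hρ0.le]
    have e3 : c ^ k = (x ^ k) ^ σ := by
      rw [e1, e2]; congr 1; field_simp
    rw [e3]
    calc (x ^ k) ^ σ ≤ ((k.factorial : ℝ) * Real.exp x) ^ σ :=
          Real.rpow_le_rpow (pow_nonneg hx0 k) (myExpBound hx0 k) hσ.le
      _ = (k.factorial : ℝ) ^ σ * (Real.exp x) ^ σ :=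
          Real.mul_rpow (Nat.cast_nonneg _) (Real.exp_pos _).le
      _ = (k.factorial : ℝ) ^ σ * E := by rw [← Real.exp_mul, hE, mul_comm x σ]
  -- explicit formula for the iterated derivative
  have hDeriv : ∀ (j k : ℕ) (x₁ y : ℝ),
      iteratedDeriv j (fun x' => iteratedDeriv k (fun y' => φ₁ x' * ψ (c * y')) y) x₁
        = (c ^ k • iteratedDeriv k ψ (c * y)) * iteratedDeriv j φ₁ x₁ := by
    intro j k x₁ y
    have hfun : (fun x' => iteratedDeriv k (fun y' => φ₁ x' * ψ (c * y')) y)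
        = fun x' => (c ^ k • iteratedDeriv k ψ (c * y)) * φ₁ x' := by
      funext x'
      have hcomp : ContDiff ℝ (⊤ : ℕ∞) (fun y' : ℝ => ψ (c * y')) :=
        hψ.comp (contDiff_const.mul contDiff_id)
      rw [myConstMul k (φ₁ x') hcomp y, iteratedDeriv_comp_const_smul (hψ.of_le (by exact_mod_cast le_top)) c]
      simp [mul_comm]
    rw [hfun, myConstMul j _ hφ₁ x₁]
  -- pointwise bound on the derivative
  have habs : ∀ (j k : ℕ) (x₁ y : ℝ),
      norm (iteratedDeriv j
          (fun x' => iteratedDeriv k (fun y' => φ₁ x' * ψ (c * y')) y) x₁)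
        ≤ (C * A ^ j * (j.factorial : ℝ) ^ s₁)
            * ((C * A ^ k * (k.factorial : ℝ) ^ s₂) * c ^ k) := by
    intro j k x₁ y
    rw [hDeriv j k x₁ y, norm_mul]
    have h1 : norm (c ^ k • iteratedDeriv k ψ (c * y))
        = c ^ k * norm (iteratedDeriv k ψ (c * y)) := by
      rw [norm_smul, Real.norm_eq_abs,
        abs_of_nonneg (pow_nonneg hc0.le k)]
    rw [h1]
    have h2 := hψGev k (c * y)
    have h3 := hφ₁Gev j x₁
    have hnn2 : (0:ℝ) ≤ C * A ^ k * (k.factorial : ℝ) ^ s₂ :=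
      mul_nonneg (mul_nonneg hC.le (pow_nonneg hA.le _))
        (Real.rpow_nonneg (Nat.cast_nonneg _) _)
    calc c ^ k * norm (iteratedDeriv k ψ (c * y)) * norm (iteratedDeriv j φ₁ x₁)
        ≤ c ^ k * (C * A ^ k * (k.factorial : ℝ) ^ s₂) * (C * A ^ j * (j.factorial : ℝ) ^ s₁) :=
          mul_le_mul (mul_le_mul_of_nonneg_left h2 (pow_nonneg hc0.le k)) h3
            (norm_nonneg _) (mul_nonneg (pow_nonneg hc0.le k) hnn2)
      _ = (C * A ^ j * (j.factorial : ℝ) ^ s₁)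
            * ((C * A ^ k * (k.factorial : ℝ) ^ s₂) * c ^ k) := by ring
  have honele : ∀ m : ℕ, (1:ℝ) ≤ m.factorial := fun m => by exact_mod_cast m.factorial_pos
  have hfacpos : ∀ m : ℕ, (0:ℝ) < m.factorial := fun m => by exact_mod_cast m.factorial_pos
  have hfac : ∀ j k : ℕ,
      ((j.factorial : ℝ)) ^ s * ((k.factorial : ℝ)) ^ s ≤ (((j+k).factorial : ℝ)) ^ s := by
    intro j k
    rw [← Real.mul_rpow (Nat.cast_nonneg _) (Nat.cast_nonneg _)]
    apply Real.rpow_le_rpow (by positivity) ?_ hspos.le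
    exact_mod_cast Nat.le_of_dvd (j+k).factorial_pos
      (Nat.factorial_mul_factorial_dvd_factorial_add j k)
  have hmid : ∀ j k : ℕ,
      (j.factorial : ℝ) ^ s₁ * ((k.factorial : ℝ) ^ s₂ * c ^ k)
        ≤ E * ((j+k).factorial : ℝ) ^ s := by
    intro j k
    have h1 : (j.factorial : ℝ) ^ s₁ ≤ (j.factorial : ℝ) ^ s :=
      Real.rpow_le_rpow_of_exponent_le (honele j) hs₁.le
    have h2 : (k.factorial : ℝ) ^ s₂ * c ^ k
        ≤ (k.factorial : ℝ) ^ s₂ * ((k.factorial : ℝ) ^ σ * E) :=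
      mul_le_mul_of_nonneg_left (hkey k) (Real.rpow_nonneg (Nat.cast_nonneg _) _)
    have h3 : (k.factorial : ℝ) ^ s₂ * ((k.factorial : ℝ) ^ σ * E)
        = (k.factorial : ℝ) ^ (s₂ + σ) * E := by
      rw [← mul_assoc, ← Real.rpow_add (hfacpos k)]
    have h4 : (k.factorial : ℝ) ^ (s₂ + σ) ≤ (k.factorial : ℝ) ^ s :=
      Real.rpow_le_rpow_of_exponent_le (honele k) (by rw [hσdef]; linarith)
    calc (j.factorial : ℝ) ^ s₁ * ((k.factorial : ℝ) ^ s₂ * c ^ k)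
        ≤ (j.factorial : ℝ) ^ s * ((k.factorial : ℝ) ^ s * E) := by
          refine mul_le_mul h1 ?_ ?_ (Real.rpow_nonneg (Nat.cast_nonneg _) _)
          · refine le_trans h2 ?_
            rw [h3]
            exact mul_le_mul_of_nonneg_right h4 hE0.le
          · exact mul_nonneg (Real.rpow_nonneg (Nat.cast_nonneg _) _) (pow_nonneg hc0.le k)
      _ = E * ((j.factorial : ℝ) ^ s * (k.factorial : ℝ) ^ s) := by ring
      _ ≤ E * ((j+k).factorial : ℝ) ^ s := mul_le_mul_of_nonneg_left (hfac j k) hE0.le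
  -- the supremum bound
  have hS0 : ∀ p : ℕ × ℕ, (0:ℝ) ≤
      ⨆ x₁ : ℝ, ⨆ y : ℝ, norm (iteratedDeriv p.1
        (fun x' => iteratedDeriv p.2 (fun y' => φ₁ x' * ψ (c * y')) y) x₁) :=
    fun p => Real.iSup_nonneg fun x₁ => Real.iSup_nonneg fun y => norm_nonneg _
  have hSle : ∀ p : ℕ × ℕ,
      (⨆ x₁ : ℝ, ⨆ y : ℝ, norm (iteratedDeriv p.1
        (fun x' => iteratedDeriv p.2 (fun y' => φ₁ x' * ψ (c * y')) y) x₁))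
        ≤ (C * A ^ p.1 * (p.1.factorial : ℝ) ^ s₁)
            * ((C * A ^ p.2 * (p.2.factorial : ℝ) ^ s₂) * c ^ p.2) :=
    fun p => ciSup_le fun x₁ => ciSup_le fun y => habs p.1 p.2 x₁ y
  -- termwise bound
  have hbound : ∀ p : ℕ × ℕ,
      (2*A)⁻¹ ^ (p.1 + p.2) *
        (⨆ x₁ : ℝ, ⨆ y : ℝ, norm (iteratedDeriv p.1
          (fun x' => iteratedDeriv p.2 (fun y' => φ₁ x' * ψ (c * y')) y) x₁)) /
        ((p.1 + p.2).factorial : ℝ) ^ s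
        ≤ (C * C * E) * ((2:ℝ)⁻¹ ^ p.1 * (2:ℝ)⁻¹ ^ p.2) := by
    intro p
    obtain ⟨j, k⟩ := p
    have hF : (0:ℝ) < ((j+k).factorial : ℝ) ^ s :=
      Real.rpow_pos_of_pos (hfacpos _) _
    have hSF : (⨆ x₁ : ℝ, ⨆ y : ℝ, norm (iteratedDeriv j
          (fun x' => iteratedDeriv k (fun y' => φ₁ x' * ψ (c * y')) y) x₁))
        ≤ (C * C * E * (A ^ j * A ^ k)) * ((j+k).factorial : ℝ) ^ s := by
      refine le_trans (hSle (j, k)) ?_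
      have : (C * A ^ j * (j.factorial : ℝ) ^ s₁)
            * ((C * A ^ k * (k.factorial : ℝ) ^ s₂) * c ^ k)
          = (C * C * (A ^ j * A ^ k))
            * ((j.factorial : ℝ) ^ s₁ * ((k.factorial : ℝ) ^ s₂ * c ^ k)) := by ring
      rw [this]
      calc (C * C * (A ^ j * A ^ k))
            * ((j.factorial : ℝ) ^ s₁ * ((k.factorial : ℝ) ^ s₂ * c ^ k))
          ≤ (C * C * (A ^ j * A ^ k)) * (E * ((j+k).factorial : ℝ) ^ s) :=
            mul_le_mul_of_nonneg_left (hmid j k)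
              (by positivity)
        _ = (C * C * E * (A ^ j * A ^ k)) * ((j+k).factorial : ℝ) ^ s := by ring
    have hdiv : (⨆ x₁ : ℝ, ⨆ y : ℝ, norm (iteratedDeriv j
          (fun x' => iteratedDeriv k (fun y' => φ₁ x' * ψ (c * y')) y) x₁))
        / ((j+k).factorial : ℝ) ^ s ≤ C * C * E * (A ^ j * A ^ k) :=
      (div_le_iff₀ hF).mpr hSF
    have hhalf : (2*A)⁻¹ * A = 2⁻¹ := by field_simp
    calc (2*A)⁻¹ ^ (j + k) *
        (⨆ x₁ : ℝ, ⨆ y : ℝ, norm (iteratedDeriv j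
          (fun x' => iteratedDeriv k (fun y' => φ₁ x' * ψ (c * y')) y) x₁)) /
        ((j + k).factorial : ℝ) ^ s
        = (2*A)⁻¹ ^ (j + k) *
          ((⨆ x₁ : ℝ, ⨆ y : ℝ, norm (iteratedDeriv j
            (fun x' => iteratedDeriv k (fun y' => φ₁ x' * ψ (c * y')) y) x₁)) /
          ((j + k).factorial : ℝ) ^ s) := by rw [mul_div_assoc]
      _ ≤ (2*A)⁻¹ ^ (j + k) * (C * C * E * (A ^ j * A ^ k)) :=
          mul_le_mul_of_nonneg_left hdiv (by positivity)
      _ = (C * C * E) * (((2*A)⁻¹ * A) ^ j * ((2*A)⁻¹ * A) ^ k) := by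
          rw [pow_add]; ring
      _ = (C * C * E) * ((2:ℝ)⁻¹ ^ j * (2:ℝ)⁻¹ ^ k) := by rw [hhalf]
  have hterm0 : ∀ p : ℕ × ℕ, (0:ℝ) ≤
      (2*A)⁻¹ ^ (p.1 + p.2) *
        (⨆ x₁ : ℝ, ⨆ y : ℝ, norm (iteratedDeriv p.1
          (fun x' => iteratedDeriv p.2 (fun y' => φ₁ x' * ψ (c * y')) y) x₁)) /
        ((p.1 + p.2).factorial : ℝ) ^ s := by
    intro p
    apply div_nonneg (mul_nonneg (pow_nonneg (by positivity) _) (hS0 p))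
      (Real.rpow_nonneg (Nat.cast_nonneg _) _)
  have hgeo : Summable (fun n : ℕ => (2:ℝ)⁻¹ ^ n) :=
    summable_geometric_of_lt_one (by norm_num) (by norm_num)
  have hmajS : Summable (fun p : ℕ × ℕ => (C * C * E) * ((2:ℝ)⁻¹ ^ p.1 * (2:ℝ)⁻¹ ^ p.2)) :=
    (Summable.mul_of_nonneg hgeo hgeo (fun n => by positivity) (fun n => by positivity)).mul_left _
  have hSummable : Summable (fun p : ℕ × ℕ =>
      (2*A)⁻¹ ^ (p.1 + p.2) *
        (⨆ x₁ : ℝ, ⨆ y : ℝ, norm (iteratedDeriv p.1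
          (fun x' => iteratedDeriv p.2 (fun y' => φ₁ x' * ψ (c * y')) y) x₁)) /
        ((p.1 + p.2).factorial : ℝ) ^ s) :=
    Summable.of_nonneg_of_le hterm0 hbound hmajS
  refine ⟨hSummable, ?_⟩
  have htsum_maj : (∑' p : ℕ × ℕ, (C * C * E) * ((2:ℝ)⁻¹ ^ p.1 * (2:ℝ)⁻¹ ^ p.2))
      = 4 * C^2 * E := by
    rw [tsum_mul_left]
    have h1 : (∑' p : ℕ × ℕ, (2:ℝ)⁻¹ ^ p.1 * (2:ℝ)⁻¹ ^ p.2) = 4 := by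
      rw [← Summable.tsum_mul_tsum hgeo hgeo (Summable.mul_of_nonneg hgeo hgeo
        (fun n => by positivity) (fun n => by positivity)),
        tsum_geometric_of_lt_one (by norm_num) (by norm_num)]
      norm_num
    rw [h1]; ring
  calc (∑' p : ℕ × ℕ,
      (2*A)⁻¹ ^ (p.1 + p.2) *
        (⨆ x₁ : ℝ, ⨆ y : ℝ, norm (iteratedDeriv p.1
          (fun x' => iteratedDeriv p.2 (fun y' => φ₁ x' * ψ (c * y')) y) x₁)) /
        ((p.1 + p.2).factorial : ℝ) ^ s)
      ≤ ∑' p : ℕ × ℕ, (C * C * E) * ((2:ℝ)⁻¹ ^ p.1 * (2:ℝ)⁻¹ ^ p.2) :=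
        Summable.tsum_le_tsum hbound hSummable hmajS
    _ = 4 * C^2 * E := htsum_maj
    _ = 4 * C^2 * Real.exp (σ * x) := by rw [hE]
end
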